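/- arXiv:1412.4572 — 3 statements merged into one kernel-verified Lean document; each statement's English description precedes it below -/
import Mathlib

section
/- Let G be a finitely generated group with at least 2 ends, let A be a finite set, and let X ⊆ A^G be a nonempty subshift of finite type. Then there exist σ ∈ X and g ∈ G with g ≠ 1_G such that σ·g = σ. In particular, a finitely generated group with at least 2 ends admits no strongly aperiodic subshift of finite type. -/
/-- The Cayley graph of a group with respect to a (symmetric) set `S`:
`g` and `g'` are adjacent when they differ by right multiplication by an element of `S`. -/
def cayley {G : Type*} [Group G] (S : Set G) : SimpleGraph G :=
  SimpleGraph.fromRel (fun g g' => g⁻¹ * g' ∈ S)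

/-- The closed ball of radius `n` about `g` in the word metric induced by `S`. -/
def ball {G : Type*} [Group G] (S : Set G) (n : ℕ) (g : G) : Set G :=
  {x : G | (cayley S).dist g x ≤ n}

/-- `G` has at least two ends (with respect to the generating set `S`): for some `n`,
deleting the ball of radius `n` about the identity from the Cayley graph leaves at least
two distinct unbounded (infinite) connected components.  (The number of unbounded components
of the complement of `B(n,1)` is nondecreasing in `n`, so this is equivalent to the limit
being at least `2`.) -/
def TwoEnds {G : Type*} [Group G] (S : Set G) : Prop :=
  ∃ n : ℕ, ∃ C₁ C₂ : ((cayley S).induce (ball S n 1)ᶜ).ConnectedComponent,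
    C₁ ≠ C₂ ∧ C₁.supp.Infinite ∧ C₂.supp.Infinite

/-- `X ⊆ A^G` is a subshift of finite type: there is a finite family of forbidden patterns
`p i : F i → A` (`F i ⊆ G` finite) such that `X` consists exactly of those `σ` for which no
translate `σ·g = (x ↦ σ (g * x))` restricts on `F i` to `p i`. -/
def IsSFT {G A : Type*} [Group G] (X : Set (G → A)) : Prop :=
  ∃ (ι : Type) (_ : Finite ι) (F : ι → Finset G) (p : (i : ι) → (↥(F i) → A)),
    X = {σ : G → A | ∀ (g : G) (i : ι), ∃ x : ↥(F i), σ (g * ↑x) ≠ p i x}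

/-- `G` admits a strongly aperiodic subshift of finite type: a nonempty SFT on a finite
alphabet all of whose points have trivial stabilizer under the shift action
`(σ·g)(x) = σ(g*x)`. -/
def HasStronglyAperiodicSFT (G : Type*) [Group G] : Prop :=
  ∃ (A : Type) (_ : Finite A) (X : Set (G → A)), IsSFT X ∧ X.Nonempty ∧
    ∀ σ ∈ X, ∀ g : G, (∀ x : G, σ (g * x) = σ x) → g = 1

/-!
Fix a ball `B(n, 1)` whose complement has two infinite components, and for `a ∈ G` let
`Beyond S n a 1` be the union of the components of `G ∖ B(n, a)` not containing `1`. It is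
infinite, so there is a sequence `u₀, u₁, …`, each far inside the region beyond the previous one,
and these regions are nested. Pigeonholing on the `σ`-pattern around `uₖ` and on the component of
`uₖ⁻¹` outside `B(n, 1)` gives `i < j` such that `t = u_j u_i⁻¹` maps `H = Beyond S n u_i 1` into
itself and `σ` is `t`-invariant near `u_i`. Every `x` lies in `tˡ H ∖ tˡ⁺¹ H` for exactly one
level `l`, and `τ x = σ (t⁻ˡ x)` is `t`-periodic. Levels only change near the translates
`tˡ B(n, u_i)`, where `σ` and `σ ∘ t` agree, so each window of `τ` is a window of a translate
of `σ`, and `τ` lies in the subshift of finite type.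
-/

open SimpleGraph (Walk Embedding ConnectedComponent dist_le dist_comm dist_eq_one_iff_adj
  dist_eq_zero_of_not_reachable)

local notation "dist[" S "]" => SimpleGraph.dist (cayley S)

namespace SimpleGraph.Walk

variable {V : Type*} {Γ : SimpleGraph V} {x y v : V}

lemma dist_le_length_of_mem_support (w : Γ.Walk x y) (hv : v ∈ w.support) :
    Γ.dist x v ≤ w.length := by
  classical
  exact (dist_le (w.takeUntil v hv)).trans (w.length_takeUntil_le_length hv)

lemma exists_mem_support_of_mem_support_map {V' : Type*} {Γ' : SimpleGraph V'} (f : Γ →g Γ')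
    (w : Γ.Walk x y) {v' : V'} (hv : v' ∈ (w.map f).support) : ∃ v ∈ w.support, f v = v' :=
  List.mem_map.1 (w.support_map f ▸ hv)

end SimpleGraph.Walk

section Cayley

variable {G : Type*} [Group G] {S : Set G}

lemma cayley_adj_iff {x y : G} :
    (cayley S).Adj x y ↔ x ≠ y ∧ (x⁻¹ * y ∈ S ∨ y⁻¹ * x ∈ S) := by
  simp [cayley, SimpleGraph.fromRel_adj]

def cayleyMulLeft (a : G) : cayley S ≃g cayley S where
  toEquiv := Equiv.mulLeft a
  map_rel_iff' := by simp [cayley_adj_iff, mul_assoc]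

lemma cayley_dist_mul_left_le (a x y : G) : dist[S] (a * x) (a * y) ≤ dist[S] x y := by
  by_cases h : (cayley S).Reachable x y
  · obtain ⟨w, hw⟩ := h.exists_walk_length_eq_dist
    calc dist[S] (a * x) (a * y) ≤ (w.map (cayleyMulLeft a).toHom).length := dist_le _
      _ = dist[S] x y := by rw [Walk.length_map, hw]
  · suffices ¬ (cayley S).Reachable (a * x) (a * y) by
      simp [dist_eq_zero_of_not_reachable this]
    rintro ⟨w⟩
    exact h ⟨(w.map (cayleyMulLeft a⁻¹).toHom).copy (inv_mul_cancel_left a x)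
      (inv_mul_cancel_left a y)⟩

@[simp]
lemma cayley_dist_mul_left (a x y : G) : dist[S] (a * x) (a * y) = dist[S] x y :=
  (cayley_dist_mul_left_le a x y).antisymm <| by
    simpa using cayley_dist_mul_left_le a⁻¹ (a * x) (a * y)

lemma cayley_dist_one_inv (a : G) : dist[S] 1 a⁻¹ = dist[S] 1 a := by
  rw [← cayley_dist_mul_left a, mul_one, mul_inv_cancel, dist_comm]

lemma cayley_connected (hgen : Subgroup.closure S = ⊤) : (cayley S).Connected := by
  suffices h : ∀ g : G, (cayley S).Reachable 1 g from
    ⟨fun x y => (h x).symm.trans (h y)⟩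
  intro g
  induction (hgen ▸ Subgroup.mem_top g : g ∈ Subgroup.closure S) using
    Subgroup.closure_induction with
  | mem s hs =>
    by_cases h1 : s = 1
    · rw [h1]
    · exact SimpleGraph.Adj.reachable (cayley_adj_iff.2 ⟨Ne.symm h1, .inl (by simpa using hs)⟩)
  | one => rfl
  | mul a b _ _ ha hb =>
    obtain ⟨w⟩ := hb
    exact ha.trans ⟨(w.map (cayleyMulLeft a).toHom).copy (mul_one a) rfl⟩
  | inv a _ ha =>
    obtain ⟨w⟩ := ha
    exact .symm ⟨(w.map (cayleyMulLeft a⁻¹).toHom).copy (mul_one a⁻¹) (inv_mul_cancel a)⟩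

lemma finite_setOf_dist_le (hS : S.Finite) (hc : (cayley S).Connected) (k : ℕ) (c : G) :
    {x | dist[S] c x ≤ k}.Finite := by
  induction k generalizing c with
  | zero => simp [hc.dist_eq_zero_iff]
  | succ k ih =>
    refine ((Set.finite_singleton c).union
      ((hS.union hS.inv).biUnion fun s _ => ih (c * s))).subset ?_
    intro x hx
    obtain ⟨w, hw⟩ := hc.exists_walk_length_eq_dist c x
    cases w with
    | nil => exact .inl rfl
    | cons h rest =>
      rename_i y
      refine .inr (Set.mem_biUnion (x := c⁻¹ * y) ?_ ?_)
      · rcases (cayley_adj_iff.1 h).2 with h | h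
        · exact .inl h
        · exact .inr (by simpa using h)
      · simp only [Walk.length_cons] at hw
        have := dist_le rest
        simp only [Set.mem_ofPred_eq, mul_inv_cancel_left] at hx ⊢
        omega

end Cayley

section Beyond

variable {G : Type*} [Group G] {S : Set G} {n : ℕ}

def ReachableOffBall (S : Set G) (n : ℕ) (c x y : G) : Prop :=
  ∃ w : (cayley S).Walk x y, ∀ v ∈ w.support, n < dist[S] c v

namespace ReachableOffBall

variable {c x y z : G}

lemma refl (h : n < dist[S] c x) : ReachableOffBall S n c x x :=
  ⟨.nil, by simpa using h⟩

lemma lt_dist_right (h : ReachableOffBall S n c x y) : n < dist[S] c y :=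
  h.elim fun w hw => hw y w.end_mem_support

lemma symm (h : ReachableOffBall S n c x y) : ReachableOffBall S n c y x :=
  h.elim fun w hw => ⟨w.reverse, by simpa using hw⟩

lemma trans (h : ReachableOffBall S n c x y) (h' : ReachableOffBall S n c y z) :
    ReachableOffBall S n c x z := by
  obtain ⟨w, hw⟩ := h
  obtain ⟨w', hw'⟩ := h'
  refine ⟨w.append w', fun v hv => ?_⟩
  rcases (Walk.mem_support_append_iff _ _).1 hv with hv | hv
  exacts [hw v hv, hw' v hv]

lemma mul_left (a : G) (h : ReachableOffBall S n c x y) :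
    ReachableOffBall S n (a * c) (a * x) (a * y) := by
  obtain ⟨w, hw⟩ := h
  refine ⟨w.map (cayleyMulLeft a).toHom, fun v hv => ?_⟩
  obtain ⟨v', hv', rfl⟩ := w.exists_mem_support_of_mem_support_map _ hv
  simpa [cayleyMulLeft] using hw v' hv'

end ReachableOffBall

lemma reachableOffBall_mul_left_iff {a c x y : G} :
    ReachableOffBall S n (a * c) (a * x) (a * y) ↔ ReachableOffBall S n c x y :=
  ⟨fun h => by simpa using h.mul_left a⁻¹, (·.mul_left a)⟩

lemma reachableOffBall_of_forall_dist_le (hc : (cayley S).Connected) {a c x : G} {m : ℕ}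
    (hball : ∀ y, dist[S] c y ≤ m → n < dist[S] a y) (hx : dist[S] c x ≤ m) :
    ReachableOffBall S n a c x := by
  obtain ⟨w, hw⟩ := hc.exists_walk_length_eq_dist c x
  exact ⟨w, fun v hv => hball v (by have := w.dist_le_length_of_mem_support hv; omega)⟩

lemma exists_reachableOffBall_dist_le (hc : (cayley S).Connected) {c x : G}
    (hx : n < dist[S] c x) : ∃ y, dist[S] c y ≤ n + 1 ∧ ReachableOffBall S n c x y := by
  suffices h : ∀ {x z : G} (w : (cayley S).Walk x z), n < dist[S] c x → dist[S] c z ≤ n →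
      ∃ y, dist[S] c y ≤ n + 1 ∧ ReachableOffBall S n c x y from
    h (hc.preconnected x c).some hx (by simp)
  intro x z w
  induction w with
  | nil => omega
  | @cons x x' _ h w ih =>
    intro hx hz
    by_cases hx' : n < dist[S] c x'
    · obtain ⟨y, hy, hx'y⟩ := ih hx' hz
      exact ⟨y, hy, .trans ⟨.cons h .nil, by simp [hx, hx']⟩ hx'y⟩
    · have := hc.dist_triangle (u := c) (v := x') (w := x)
      have := dist_eq_one_iff_adj.2 h.symm
      exact ⟨x, by omega, .refl hx⟩

/-- The union of the components of `G ∖ B(n, a)` that do not contain `b`. -/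
def Beyond (S : Set G) (n : ℕ) (a b : G) : Set G :=
  {x | n < dist[S] a x ∧ ¬ ReachableOffBall S n a b x}

lemma mul_mem_beyond_iff {a b c x : G} :
    c * x ∈ Beyond S n (c * a) (c * b) ↔ x ∈ Beyond S n a b := by
  simp [Beyond, reachableOffBall_mul_left_iff]

lemma beyond_congr {a b b' : G} (h : ReachableOffBall S n a b b') :
    Beyond S n a b = Beyond S n a b' := by
  ext x
  exact and_congr_right fun _ => not_congr ⟨h.symm.trans, h.trans⟩

lemma dist_le_of_mem_beyond_of_notMem (hc : (cayley S).Connected) {a b y z : G}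
    (hy : y ∈ Beyond S n a b) (hz : z ∉ Beyond S n a b) :
    dist[S] a y ≤ n + dist[S] y z := by
  obtain ⟨w, hw⟩ := hc.exists_walk_length_eq_dist y z
  obtain ⟨v, hv, hav⟩ : ∃ v ∈ w.support, dist[S] a v ≤ n := by
    by_contra! hout
    have hyz : ReachableOffBall S n a y z := ⟨w, hout⟩
    exact hz ⟨hyz.lt_dist_right, fun hbz => hy.2 (hbz.trans hyz.symm)⟩
  have := w.dist_le_length_of_mem_support hv
  have := hc.dist_triangle (u := a) (v := v) (w := y)
  rw [dist_comm (u := v)] at *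
  omega

/-- The ball `B(n, b)` meets neither `B(n, a)` nor the ball `B(dist 1 a + n, 1) ⊇ B(n, a)`. -/
lemma beyond_subset_beyond (hc : (cayley S).Connected) {a b : G} (hb : b ∈ Beyond S n a 1)
    (hab : dist[S] 1 a + 2 * n < dist[S] 1 b) : Beyond S n b 1 ⊆ Beyond S n a 1 := by
  intro x ⟨hbx, hx⟩
  have ha : ∀ y, dist[S] 1 y ≤ dist[S] 1 a + n → n < dist[S] b y := fun y hy => by
    have := hc.dist_triangle (u := 1) (v := y) (w := b)
    rw [dist_comm (u := y)] at this
    omega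
  have hb' : ∀ y, dist[S] b y ≤ n → n < dist[S] a y := fun y hy => by
    have := hc.dist_triangle (u := 1) (v := a) (w := b)
    have := hc.dist_triangle (u := a) (v := y) (w := b)
    rw [dist_comm (u := y)] at *
    omega
  refine ⟨not_le.1 fun hax => hx ?_, fun ⟨w, hw⟩ => ?_⟩
  · refine reachableOffBall_of_forall_dist_le hc ha ?_
    have := hc.dist_triangle (u := 1) (v := a) (w := x)
    omega
  · classical
    obtain ⟨v, hv, hbv⟩ : ∃ v ∈ w.support, dist[S] b v ≤ n := by
      by_contra! hout
      exact hx ⟨w, hout⟩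
    have h1v : ReachableOffBall S n a 1 v :=
      ⟨w.takeUntil v hv, fun y hy => hw y (w.support_takeUntil_subset_support hv hy)⟩
    exact hb.2 (h1v.trans (reachableOffBall_of_forall_dist_le hc hb' hbv).symm)

end Beyond

section Levels

variable {G : Type*} [Group G] {H : Set G} {t : G}

lemma pow_mul_mem (htH : ∀ x ∈ H, t * x ∈ H) (k : ℕ) {x : G} (hx : x ∈ H) : t ^ k * x ∈ H := by
  induction k with
  | zero => simpa using hx
  | succ k ih => simpa [pow_succ', mul_assoc] using htH _ ih

lemma zpow_neg_mul_mem_of_le (htH : ∀ x ∈ H, t * x ∈ H) {x : G} {l l' : ℤ} (hl : l ≤ l')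
    (h : t ^ (-l') * x ∈ H) : t ^ (-l) * x ∈ H := by
  obtain ⟨k, rfl⟩ : ∃ k : ℕ, l' = l + k := ⟨(l' - l).toNat, by omega⟩
  simpa [← mul_assoc, ← zpow_natCast, ← zpow_add] using pow_mul_mem htH k h

lemma injective_zpow_mul (htH : ∀ x ∈ H, t * x ∈ H) {u : G} (hu : u ∉ H) (htu : t * u ∈ H) :
    Function.Injective fun l : ℤ => t ^ l * u := by
  have key (l l' : ℤ) (hll' : l < l') : t ^ l * u ≠ t ^ l' * u := by
    intro heq
    obtain ⟨k, rfl⟩ : ∃ k : ℕ, l' = l + k + 1 := ⟨(l' - l - 1).toNat, by omega⟩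
    have hk : t ^ ((k : ℤ) + 1) * u = u := by
      have := congrArg (t ^ (-l) * ·) heq
      simp only [← mul_assoc, ← zpow_add] at this
      rwa [neg_add_cancel, zpow_zero, one_mul, show -l + (l + k + 1) = k + 1 by ring,
        eq_comm] at this
    rw [zpow_add_one, zpow_natCast, mul_assoc] at hk
    exact hu (hk ▸ pow_mul_mem htH k htu)
  intro l l' heq
  by_contra hne
  rcases Ne.lt_or_gt hne with h | h
  exacts [key l l' h heq, key l' l h heq.symm]

/-- The largest `l` with `x ∈ t ^ l • H`; meaningful when that set of `l` is nonempty and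
bounded above (`sSup ∅ = 0` in `ℤ`). -/
noncomputable def level (H : Set G) (t x : G) : ℤ := sSup {l : ℤ | t ^ (-l) * x ∈ H}

lemma zpow_neg_mul_mem_iff_le_level (htH : ∀ x ∈ H, t * x ∈ H) {x : G}
    (hbdd : BddAbove {l : ℤ | t ^ (-l) * x ∈ H}) (hne : ∃ l : ℤ, t ^ (-l) * x ∈ H) {l : ℤ} :
    t ^ (-l) * x ∈ H ↔ l ≤ level H t x :=
  ⟨fun h => le_csSup hbdd h, fun h => zpow_neg_mul_mem_of_le htH h (Int.csSup_mem hne hbdd)⟩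

lemma level_mul_left (htH : ∀ x ∈ H, t * x ∈ H)
    (hbdd : ∀ x, BddAbove {l : ℤ | t ^ (-l) * x ∈ H}) (hne : ∀ x, ∃ l : ℤ, t ^ (-l) * x ∈ H)
    (x : G) : level H t (t * x) = level H t x + 1 := by
  refine eq_of_forall_le_iff fun l => ?_
  rw [← zpow_neg_mul_mem_iff_le_level htH (hbdd _) (hne _), ← mul_assoc, ← zpow_add_one,
    show -l + 1 = -(l - 1) by ring, zpow_neg_mul_mem_iff_le_level htH (hbdd _) (hne _)]
  omega

end Levels

section Periodization

variable {G : Type*} [Group G] {S : Set G} {n : ℕ} {H : Set G} {u t : G}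

structure IsShiftedCut (S : Set G) (n : ℕ) (H : Set G) (u t : G) : Prop where
  /-- Every path from `H` to its complement meets the ball `B(n, u)`. -/
  dist_le : ∀ y ∈ H, ∀ z ∉ H, dist[S] u y ≤ n + dist[S] y z
  mul_mem : ∀ x ∈ H, t * x ∈ H
  mul_center_mem : t * u ∈ H
  center_notMem : u ∉ H

namespace IsShiftedCut

lemma ne_one (hH : IsShiftedCut S n H u t) : t ≠ 1 :=
  fun h => hH.center_notMem (by simpa [h] using hH.mul_center_mem)

lemma dist_zpow_mul_le (hH : IsShiftedCut S n H u t) {l : ℤ} {y z : G} (hy : t ^ (-l) * y ∈ H)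
    (hz : t ^ (-l) * z ∉ H) :
    dist[S] (t ^ l * u) y ≤ n + dist[S] y z := by
  have h := hH.dist_le _ hy _ hz
  rwa [cayley_dist_mul_left, ← cayley_dist_mul_left (t ^ l), ← mul_assoc, ← zpow_add,
    add_neg_cancel, zpow_zero, one_mul] at h

lemma finite_setOf_dist_zpow_mul_le (hH : IsShiftedCut S n H u t) (hS : S.Finite)
    (hc : (cayley S).Connected) (y : G) (R : ℕ) : {l : ℤ | dist[S] (t ^ l * u) y ≤ R}.Finite := by
  refine ((finite_setOf_dist_le hS hc R y).preimage
    (injective_zpow_mul hH.mul_mem hH.center_notMem hH.mul_center_mem).injOn).subset ?_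
  intro l hl
  simpa [dist_comm] using hl

lemma bddAbove (hH : IsShiftedCut S n H u t) (hS : S.Finite) (hc : (cayley S).Connected)
    (x : G) : BddAbove {l : ℤ | t ^ (-l) * x ∈ H} := by
  have hfin := hH.finite_setOf_dist_zpow_mul_le hS hc x (n + dist[S] x u)
  refine ((bddAbove_Iio (a := 0)).union hfin.bddAbove).mono fun l hl => ?_
  rcases lt_or_ge l 0 with hl0 | hl0
  · exact .inl hl0
  · refine .inr (hH.dist_zpow_mul_le hl fun hu => hH.center_notMem ?_)
    simpa [← mul_assoc, ← zpow_natCast, ← zpow_add, show ((l.toNat : ℕ) : ℤ) = l by omega] using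
      pow_mul_mem hH.mul_mem l.toNat hu

lemma exists_zpow_neg_mul_mem (hH : IsShiftedCut S n H u t) (hS : S.Finite)
    (hc : (cayley S).Connected) (x : G) : ∃ l : ℤ, t ^ (-l) * x ∈ H := by
  by_contra! hx
  refine Set.Iic_infinite (0 : ℤ) <|
    (hH.finite_setOf_dist_zpow_mul_le hS hc (t * u) (n + dist[S] (t * u) x)).subset fun l hl => ?_
  refine hH.dist_zpow_mul_le ?_ (hx l)
  have hl : (((-l).toNat : ℕ) : ℤ) = -l := by simp only [Set.mem_Iic] at hl; omega
  simpa [← zpow_natCast, hl] using pow_mul_mem hH.mul_mem (-l).toNat hH.mul_center_mem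

lemma zpow_neg_mul_mem_iff (hH : IsShiftedCut S n H u t) (hS : S.Finite)
    (hc : (cayley S).Connected) {x : G} {l : ℤ} : t ^ (-l) * x ∈ H ↔ l ≤ level H t x :=
  zpow_neg_mul_mem_iff_le_level hH.mul_mem (hH.bddAbove hS hc x)
    (hH.exists_zpow_neg_mul_mem hS hc x)

lemma level_mul_left (hH : IsShiftedCut S n H u t) (hS : S.Finite) (hc : (cayley S).Connected)
    (x : G) : level H t (t * x) = level H t x + 1 :=
  _root_.level_mul_left hH.mul_mem (hH.bddAbove hS hc) (hH.exists_zpow_neg_mul_mem hS hc) x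

variable {A : Type*} {R : ℕ} {σ : G → A}

/-- Crossing from level `l` to `l + 1` near `y` happens inside `t ^ (l + 1) • B(n + R, u)`, where
`σ` is `t`-invariant. -/
lemma apply_zpow_neg_succ_mul (hH : IsShiftedCut S n H u t) (hS : S.Finite)
    (hc : (cayley S).Connected) (hσ : ∀ x, dist[S] u x ≤ n + R → σ (t * x) = σ x)
    {y y₀ : G} (hyy₀ : dist[S] y y₀ ≤ R) {l : ℤ} (hy : l + 1 ≤ level H t y)
    (hy₀ : level H t y₀ < l + 1) : σ (t ^ (-(l + 1)) * y) = σ (t ^ (-l) * y) := by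
  have hd := hH.dist_zpow_mul_le ((hH.zpow_neg_mul_mem_iff hS hc).2 hy)
    fun h => not_le.2 hy₀ ((hH.zpow_neg_mul_mem_iff hS hc).1 h)
  have := hσ (t ^ (-(l + 1)) * y) (by
    rw [← cayley_dist_mul_left (t ^ (l + 1)), ← mul_assoc, ← zpow_add, add_neg_cancel,
      zpow_zero, one_mul]
    omega)
  rwa [← mul_assoc, ← zpow_one_add, show 1 + -(l + 1) = -l by ring, eq_comm] at this

lemma apply_zpow_neg_level_mul (hH : IsShiftedCut S n H u t) (hS : S.Finite)
    (hc : (cayley S).Connected) (hσ : ∀ x, dist[S] u x ≤ n + R → σ (t * x) = σ x)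
    {y y₀ : G} (hyy₀ : dist[S] y y₀ ≤ R) (hle : level H t y₀ ≤ level H t y) :
    σ (t ^ (-level H t y) * y) = σ (t ^ (-level H t y₀) * y) := by
  refine Int.leInduction (m := level H t y₀)
    (motive := fun l _ => l ≤ level H t y → σ (t ^ (-l) * y) = σ (t ^ (-level H t y₀) * y))
    (fun _ => rfl) (fun l hl ih hl' => ?_) _ hle le_rfl
  rw [hH.apply_zpow_neg_succ_mul hS hc hσ hyy₀ hl' (by omega)]
  exact ih (by omega)

theorem exists_periodic (hH : IsShiftedCut S n H u t) (hS : S.Finite)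
    (hc : (cayley S).Connected) (hσ : ∀ x, dist[S] u x ≤ n + R → σ (t * x) = σ x) :
    ∃ τ : G → A, (∀ x, τ (t * x) = τ x) ∧ ∀ K : Finset G,
      (∀ x ∈ K, ∀ x' ∈ K, dist[S] x x' ≤ R) → ∀ g, ∃ h, ∀ x ∈ K, τ (g * x) = σ (h * x) := by
  refine ⟨fun x => σ (t ^ (-level H t x) * x), fun x => ?_, fun K hK g => ?_⟩
  · dsimp only
    rw [hH.level_mul_left hS hc, ← mul_assoc, ← zpow_add_one,
      show -(level H t x + 1) + 1 = -level H t x by ring]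
  rcases K.eq_empty_or_nonempty with rfl | hne
  · exact ⟨1, by simp⟩
  obtain ⟨x₀, hx₀, hmin⟩ := K.exists_min_image (fun x => level H t (g * x)) hne
  refine ⟨t ^ (-level H t (g * x₀)) * g, fun x hx => ?_⟩
  rw [mul_assoc]
  exact hH.apply_zpow_neg_level_mul hS hc hσ (by simpa using hK x hx x₀ hx₀) (hmin x hx)

end IsShiftedCut

end Periodization

section Ends

variable {G : Type*} [Group G] {S : Set G} {n : ℕ}

lemma reachableOffBall_iff_reachable_induce {x y : ↥(ball S n 1)ᶜ} :
    ReachableOffBall S n 1 x y ↔ ((cayley S).induce (ball S n 1)ᶜ).Reachable x y := by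
  have hmem (v : G) : v ∈ (ball S n 1)ᶜ ↔ n < dist[S] 1 v := by simp [_root_.ball]
  constructor
  · rintro ⟨w, hw⟩
    exact ⟨w.induce _ fun v hv => (hmem v).2 (hw v hv)⟩
  · rintro ⟨w⟩
    refine ⟨w.map (Embedding.induce _).toHom, fun v hv => ?_⟩
    obtain ⟨v', -, rfl⟩ := w.exists_mem_support_of_mem_support_map _ hv
    exact (hmem v').1 v'.2

lemma TwoEnds.exists_infinite_reachableOffBall (h : TwoEnds S) :
    ∃ n, ∀ c : G,
      ∃ x, ¬ ReachableOffBall S n 1 c x ∧ {y | ReachableOffBall S n 1 x y}.Infinite := by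
  obtain ⟨n, C₁, C₂, hne, h₁, h₂⟩ := h
  obtain ⟨v₁, rfl⟩ := C₁.exists_rep
  obtain ⟨v₂, rfl⟩ := C₂.exists_rep
  have hclass (v : ↥(ball S n 1)ᶜ)
      (hv : ((cayley S).induce (ball S n 1)ᶜ |>.connectedComponentMk v).supp.Infinite) :
      {y | ReachableOffBall S n 1 v y}.Infinite := by
    refine (hv.image Subtype.val_injective.injOn).mono ?_
    rintro _ ⟨y, hy, rfl⟩
    exact reachableOffBall_iff_reachable_induce.2 (ConnectedComponent.exact hy).symm
  refine ⟨n, fun c => ?_⟩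
  by_cases hc₁ : ReachableOffBall S n 1 c v₁
  · refine ⟨v₂, fun hc₂ => hne ?_, hclass v₂ h₂⟩
    exact ConnectedComponent.sound
      (reachableOffBall_iff_reachable_induce.1 (hc₁.symm.trans hc₂))
  · exact ⟨v₁, hc₁, hclass v₁ h₁⟩

lemma infinite_beyond
    (hn : ∀ c : G, ∃ x, ¬ ReachableOffBall S n 1 c x ∧ {y | ReachableOffBall S n 1 x y}.Infinite)
    (a : G) : (Beyond S n a 1).Infinite := by
  obtain ⟨x, hx, hinf⟩ := hn a⁻¹
  refine (hinf.image (mul_right_injective a).injOn).mono ?_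
  rintro _ ⟨y, hy, rfl⟩
  simpa using (mul_mem_beyond_iff (c := a) (a := 1) (b := a⁻¹)).2
    ⟨hy.lt_dist_right, fun h => hx (h.trans hy.symm)⟩

lemma exists_seq_nested_beyond (hS : S.Finite) (hc : (cayley S).Connected)
    (hinf : ∀ a : G, (Beyond S n a 1).Infinite) :
    ∃ f : ℕ → G, (∀ k, n < dist[S] 1 (f k)) ∧
      ∀ i j, i < j → f j ∈ Beyond S n (f i) 1 ∧ Beyond S n (f j) 1 ⊆ Beyond S n (f i) 1 := by
  have step (a : G) : ∃ b ∈ Beyond S n a 1, dist[S] 1 a + 2 * n < dist[S] 1 b := by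
    obtain ⟨b, hb, hfar⟩ := ((hinf a).sdiff (finite_setOf_dist_le hS hc _ 1)).nonempty
    exact ⟨b, hb, not_le.1 hfar⟩
  choose next hnext hfar using step
  let Nested (a b : G) : Prop := b ∈ Beyond S n a 1 ∧ Beyond S n b 1 ⊆ Beyond S n a 1
  have : IsTrans G Nested := ⟨fun _ _ _ hab hbc => ⟨hab.2 hbc.1, hbc.2.trans hab.2⟩⟩
  refine ⟨fun k => next^[k + 1] 1, fun k => ?_,
    fun i j hij =>
      Nat.rel_of_forall_rel_succ_of_lt Nested (f := fun k => next^[k + 1] 1) (fun k => ?_) hij⟩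
  · have := hfar (next^[k] 1)
    dsimp only
    rw [Function.iterate_succ_apply']
    omega
  · rw [Function.iterate_succ_apply' _ (k + 1)]
    exact ⟨hnext _, beyond_subset_beyond hc (hnext _) (hfar _)⟩

/-- `t = v u⁻¹` for two members `u, v` of a nested sequence that see the same `σ`-pattern and
whose inverses lie in the same component of the complement of `B(n, 1)`. -/
lemma TwoEnds.exists_isShiftedCut (h2 : TwoEnds S) (hS : S.Finite) (hc : (cayley S).Connected)
    {A : Type*} [Finite A] (σ : G → A) (R : ℕ) :
    ∃ n H u t, IsShiftedCut S n H u t ∧ ∀ x, dist[S] u x ≤ n + R → σ (t * x) = σ x := by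
  obtain ⟨n, hn⟩ := h2.exists_infinite_reachableOffBall
  obtain ⟨f, hf, hnest⟩ := exists_seq_nested_beyond hS hc (infinite_beyond hn)
  choose y hy hfy using fun k => exists_reachableOffBall_dist_le hc (c := 1) (x := (f k)⁻¹)
    (by rw [cayley_dist_one_inv]; exact hf k)
  have := (finite_setOf_dist_le hS hc (n + R) 1).to_subtype
  have := (finite_setOf_dist_le hS hc (n + 1) 1).to_subtype
  obtain ⟨i, j, hij, heq⟩ := Finite.exists_ne_map_eq_of_infinite fun k =>
    ((fun x : {x | dist[S] 1 x ≤ n + R} => σ (f k * x)),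
      (⟨y k, hy k⟩ : {x | dist[S] 1 x ≤ n + 1}))
  wlog hlt : i < j generalizing i j
  · exact this j i hij.symm heq.symm (hij.symm.lt_of_le (not_lt.1 hlt))
  simp only [Prod.mk.injEq, Subtype.mk.injEq] at heq
  obtain ⟨hσ, hyij⟩ := heq
  refine ⟨n, Beyond S n (f i) 1, f i, f j * (f i)⁻¹,
    ⟨fun _ hy _ hz => dist_le_of_mem_beyond_of_notMem hc hy hz, fun x hx => ?_,
      by simpa using (hnest i j hlt).1, fun h => by simpa using h.1⟩, fun x hx => ?_⟩
  · have hcomp : ReachableOffBall S n (f j) (f j * (f i)⁻¹) 1 := by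
      have := ((hfy i).trans (hyij ▸ (hfy j).symm)).mul_left (f j)
      rwa [mul_one, mul_inv_cancel] at this
    have := (mul_mem_beyond_iff (c := f j * (f i)⁻¹)).2 hx
    rw [inv_mul_cancel_right, mul_one, beyond_congr hcomp] at this
    exact (hnest i j hlt).2 this
  · have := congrFun hσ ⟨(f i)⁻¹ * x, by
      rwa [Set.mem_ofPred_eq, ← cayley_dist_mul_left (f i), mul_one, mul_inv_cancel_left]⟩
    simpa [mul_assoc] using this.symm

end Ends

lemma IsSFT.exists_window {G A : Type*} [Group G] {X : Set (G → A)} (hX : IsSFT X) :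
    ∃ K : Finset G, ∀ σ ∈ X, ∀ τ : G → A,
      (∀ g, ∃ h, ∀ x ∈ K, τ (g * x) = σ (h * x)) → τ ∈ X := by
  classical
  obtain ⟨ι, hι, F, p, rfl⟩ := hX
  have := Fintype.ofFinite ι
  refine ⟨Finset.univ.biUnion F, fun σ hσ τ hτ g i => ?_⟩
  obtain ⟨h, hh⟩ := hτ g
  obtain ⟨x, hx⟩ := hσ h i
  exact ⟨x, hh x (Finset.mem_biUnion.2 ⟨i, Finset.mem_univ i, x.2⟩) ▸ hx⟩

theorem exists_periodic_mem_of_twoEnds {G : Type*} [Group G] {S : Set G} (hS : S.Finite)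
    (hgen : Subgroup.closure S = ⊤) (h2 : TwoEnds S) {A : Type*} [Finite A] {X : Set (G → A)}
    (hX : IsSFT X) (hne : X.Nonempty) : ∃ σ ∈ X, ∃ g : G, g ≠ 1 ∧ ∀ x, σ (g * x) = σ x := by
  have hc := cayley_connected hgen
  obtain ⟨K, hK⟩ := hX.exists_window
  obtain ⟨σ, hσ⟩ := hne
  obtain ⟨n, H, u, t, hH, hσt⟩ :=
    h2.exists_isShiftedCut hS hc σ (K.sup fun x => K.sup (dist[S] x))
  obtain ⟨τ, hτt, hτK⟩ := hH.exists_periodic hS hc hσt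
  refine ⟨τ, hK σ hσ τ (hτK K fun x hx x' hx' => ?_), t, hH.ne_one, hτt⟩
  exact (Finset.le_sup hx').trans (Finset.le_sup (f := fun x => K.sup (dist[S] x)) hx)

theorem stmt0_general {G : Type*} [Group G] (S : Finset G)
    (hgen : Subgroup.closure (S : Set G) = ⊤)
    (h2 : TwoEnds (S : Set G))
    {A : Type*} [Finite A] (X : Set (G → A)) (hX : IsSFT X) (hne : X.Nonempty) :
    (∃ σ ∈ X, ∃ g : G, g ≠ 1 ∧ ∀ x : G, σ (g * x) = σ x) ∧
      ¬ HasStronglyAperiodicSFT G := by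
  refine ⟨exists_periodic_mem_of_twoEnds S.finite_toSet hgen h2 hX hne, ?_⟩
  rintro ⟨A', _, X', hX', hne', haper⟩
  obtain ⟨σ, hσ, g, hg, hperiodic⟩ :=
    exists_periodic_mem_of_twoEnds S.finite_toSet hgen h2 hX' hne'
  exact hg (haper σ hσ g hperiodic)

/-- if `G` is a finitely generated group with at least two ends, `A` is a finite
set and `X ⊆ A^G` is a nonempty subshift of finite type, then some `σ ∈ X` is fixed by some
`g ≠ 1`; in particular `G` has no strongly aperiodic SFT. -/
theorem stmt0 {G : Type*} [Group G] (S : Finset G)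
    (hsym : ∀ s ∈ S, s⁻¹ ∈ S) (hgen : Subgroup.closure (S : Set G) = ⊤)
    (h2 : TwoEnds (S : Set G))
    {A : Type*} [Finite A] (X : Set (G → A)) (hX : IsSFT X) (hne : X.Nonempty) :
    (∃ σ ∈ X, ∃ g : G, g ≠ 1 ∧ ∀ x : G, σ (g * x) = σ x) ∧
      ¬ HasStronglyAperiodicSFT G :=
  stmt0_general S hgen h2 X hX hne
end

section
/- Let G be a group finitely presented over its finite symmetric generating set S by relators of length at most K_G, and let H be a group with finite symmetric generating set T. For any σ ∈ Y_n, any g ∈ G, and any two words w, w′ over S representing the same element of G, one has ∫_{g·w} σ = ∫_{g·w′} σ; that is, ∫_{g·w} σ depends only on g and the element of G represented by w. -/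
/-- `f : G → H` is `n`-Lipschitz for the word metrics associated to `S` and `T`. -/
def IsLip {G H : Type*} [Group G] [Group H] (S : Set G) (T : Set H)
    (n : ℕ) (f : G → H) : Prop :=
  ∀ x y : G, (cayley T).dist (f x) (f y) ≤ n * (cayley S).dist x y

/-- The product in `G` of (the letters of) a word over `S`. -/
def wordProd {G : Type*} [Group G] (S : Finset G) (w : List ↥S) : G :=
  (w.map (fun s => (s : G))).prod

/-- The integral `∫_{g·w} σ` of a configuration `σ : G → (S → H)` along the word `w` based at
`g` : the telescoping product `σ(g)(s₀)·σ(gs₀)(s₁)⋯σ(gs₀⋯s_{k-1})(s_k)`. -/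
def sint {G H : Type*} [Group G] [Group H] {S : Finset G}
    (σ : G → ↥S → H) : G → List ↥S → H
  | _, [] => 1
  | g, s :: w => σ g s * sint σ (g * (s : G)) w

/-- An elementary homotopy move between words over `S`: replace a subword `v` of length at
most `K` by a word `v'` of length at most `K` representing the same element of `G`. -/
def ElemMove {G : Type*} [Group G] (S : Finset G) (K : ℕ) (w₁ w₂ : List ↥S) : Prop :=
  ∃ u v v' x : List ↥S, w₁ = u ++ v ++ x ∧ w₂ = u ++ v' ++ x ∧
    v.length ≤ K ∧ v'.length ≤ K ∧ wordProd S v = wordProd S v'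

/-- `G` is presented over the (symmetric) generating set `S` by relators of length at most
`K`: any two words over `S` representing the same element of `G` are connected by a finite
sequence of elementary moves of size at most `K`. -/
def PresentedBy {G : Type*} [Group G] (S : Finset G) (K : ℕ) : Prop :=
  ∀ w w' : List ↥S, wordProd S w = wordProd S w' →
    Relation.ReflTransGen (ElemMove S K) w w'

/-- Membership in `Y_n` (relative to relator bound `K`): `σ ∈ (B_H(n,1)^S)^G` is such that
for every `g ∈ G` and every pair of words `w₁, w₂` over `S` of length at most `K`
representing the same element of `G`, `∫_{g·w₁} σ = ∫_{g·w₂} σ`. -/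
def memY {G H : Type*} [Group G] [Group H] (S : Finset G) (T : Finset H) (n K : ℕ)
    (σ : G → ↥S → ↥(ball (T : Set H) n 1)) : Prop :=
  ∀ (g : G) (w₁ w₂ : List ↥S), w₁.length ≤ K → w₂.length ≤ K →
    wordProd S w₁ = wordProd S w₂ →
    sint (fun g s => ((σ g s : H))) g w₁ = sint (fun g s => ((σ g s : H))) g w₂

/-!
Integration along words is multiplicative under concatenation, so an elementary move
`u ++ v ++ x ↦ u ++ v' ++ x` changes only the middle factor `∫_{(g·u)·v} σ`, which the
`Y_n` condition leaves unchanged. A presentation with relators of length at most `K`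
connects any two words for the same element by such moves.
-/

section WordIntegral

variable {G H : Type*} [Group G] [Group H] {S : Finset G}

lemma wordProd_append (u v : List ↥S) :
    wordProd S (u ++ v) = wordProd S u * wordProd S v := by
  simp [wordProd]

lemma sint_append (σ : G → ↥S → H) (g : G) (u v : List ↥S) :
    sint σ g (u ++ v) = sint σ g u * sint σ (g * wordProd S u) v := by
  induction u generalizing g with
  | nil => simp [sint, wordProd]
  | cons a u ih =>
    rw [List.cons_append, sint, sint, ih]
    simp [wordProd, mul_assoc]

variable {K : ℕ} {σ : G → ↥S → H}

lemma sint_eq_of_elemMove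
    (hσ : ∀ g (v v' : List ↥S), v.length ≤ K → v'.length ≤ K →
      wordProd S v = wordProd S v' → sint σ g v = sint σ g v')
    {w₁ w₂ : List ↥S} (hw : ElemMove S K w₁ w₂) (g : G) :
    sint σ g w₁ = sint σ g w₂ := by
  obtain ⟨u, v, v', x, rfl, rfl, hv, hv', hvv'⟩ := hw
  simp only [sint_append, wordProd_append, hσ _ v v' hv hv' hvv', hvv']

lemma sint_eq_of_presentedBy (hpres : PresentedBy S K)
    (hσ : ∀ g (v v' : List ↥S), v.length ≤ K → v'.length ≤ K →
      wordProd S v = wordProd S v' → sint σ g v = sint σ g v')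
    (g : G) {w w' : List ↥S} (hww' : wordProd S w = wordProd S w') :
    sint σ g w = sint σ g w' := by
  have hmoves := hpres w w' hww'
  clear hww'
  induction hmoves with
  | refl => rfl
  | tail _ hmove ih => exact ih.trans (sint_eq_of_elemMove hσ hmove g)

end WordIntegral

theorem stmt12_general {G H : Type*} [Group G] [Group H] (S : Finset G) (T : Finset H)
    (K n : ℕ) (hpres : PresentedBy S K)
    (σ : G → ↥S → ↥(ball (T : Set H) n 1)) (hσ : memY S T n K σ)
    (g : G) (w w' : List ↥S) (hww' : wordProd S w = wordProd S w') :
    sint (fun g s => ((σ g s : H))) g w = sint (fun g s => ((σ g s : H))) g w' :=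
  sint_eq_of_presentedBy hpres hσ g hww'

/-- if `G` is presented over `S` by relators of length at most `K_G`, then for
`σ ∈ Y_n`, `∫_{g·w} σ` depends only on `g` and the element of `G` represented by `w`. -/
theorem stmt12 {G H : Type*} [Group G] [Group H] (S : Finset G) (T : Finset H)
    (hSsym : ∀ s ∈ S, s⁻¹ ∈ S) (hSgen : Subgroup.closure (S : Set G) = ⊤)
    (hTsym : ∀ t ∈ T, t⁻¹ ∈ T) (hTgen : Subgroup.closure (T : Set H) = ⊤)
    (K n : ℕ) (hpres : PresentedBy S K)
    (σ : G → ↥S → ↥(ball (T : Set H) n 1)) (hσ : memY S T n K σ)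
    (g : G) (w w' : List ↥S) (hww' : wordProd S w = wordProd S w') :
    sint (fun g s => ((σ g s : H))) g w = sint (fun g s => ((σ g s : H))) g w' :=
  stmt12_general S T K n hpres σ hσ g w w' hww'
end

section
/- Let G and H be groups with fixed finite symmetric generating sets, each equipped with its word metric, let (f,F) ∈ QIP_n(G,H), and let π ∈ G be such that the pair (df, ℓ_{Ff}) ∈ (B_H(n,1_H)^S × B_G(n²+n,1_G)^{B_H(n,1_H)})^G is π-periodic, i.e. (df, ℓ_{Ff})·π = (df, ℓ_{Ff}) under the shift action. Then for all g ∈ G, f(πg) = f(π)·f(1_G)⁻¹·f(g). -/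
/-- An `n`-QI pair: `f` and `F` are `n`-Lipschitz and mutual `n`-quasi-inverses. -/
def IsQIPair {G H : Type*} [Group G] [Group H] (S : Set G) (T : Set H)
    (n : ℕ) (f : G → H) (F : H → G) : Prop :=
  IsLip S T n f ∧ IsLip T S n F ∧
    (∀ g : G, (cayley S).dist (F (f g)) g ≤ n) ∧
    (∀ h : H, (cayley T).dist (f (F h)) h ≤ n)

/-- `f : G → H` is a quasi-isometry for the word metrics: for some `n > 0` it is an
`n`-quasi-isometric embedding and `n`-quasi-surjective. -/
def IsQI {G H : Type*} [Group G] [Group H] (S : Set G) (T : Set H) (f : G → H) : Prop :=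
  ∃ n : ℕ, 0 < n ∧
    (∀ x y : G,
      ((cayley S).dist x y : ℝ) / n - n ≤ ((cayley T).dist (f x) (f y) : ℝ) ∧
      ((cayley T).dist (f x) (f y) : ℝ) ≤ n * ((cayley S).dist x y : ℝ) + n) ∧
    (∀ h : H, ∃ g : G, (cayley T).dist (f g) h ≤ n)

theorem mul_inv_eq_mul_inv_iff_inv_mul_eq {H : Type*} [Group H] {a b c d : H} :
    c * d⁻¹ = a * b⁻¹ ↔ a⁻¹ * c = b⁻¹ * d := by
  rw [mul_inv_eq_iff_eq_mul, inv_mul_eq_iff_eq_mul, mul_assoc]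

theorem apply_eq_mul_of_inv_mul_apply_mul_eq {G H : Type*} [Group G] [Group H] {S : Set G}
    (hS : Subgroup.closure S = ⊤) {u v : G → H}
    (h : ∀ g, ∀ s ∈ S, (u g)⁻¹ * u (g * s) = (v g)⁻¹ * v (g * s)) (g : G) :
    u g = u 1 * (v 1)⁻¹ * v g := by
  -- equal derivatives make `x ↦ u x * (v x)⁻¹` invariant under right multiplication by `S`
  suffices u g * (v g)⁻¹ = u 1 * (v 1)⁻¹ by rw [← this, inv_mul_cancel_right]
  induction (hS ▸ Subgroup.mem_top g : g ∈ Subgroup.closure S)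
    using Subgroup.closure_induction_right with
  | one => rfl
  | mul_right x _ s hs ih => rwa [mul_inv_eq_mul_inv_iff_inv_mul_eq.2 (h x s hs)]
  | mul_inv_cancel x _ s hs ih =>
    have hx := h (x * s⁻¹) s hs
    rw [inv_mul_cancel_right] at hx
    rwa [← mul_inv_eq_mul_inv_iff_inv_mul_eq.2 hx]

theorem stmt18_general {G H : Type*} [Group G] [Group H] (S : Finset G)
    (hSgen : Subgroup.closure (S : Set G) = ⊤)
    (f : G → H) (π : G)
    (hdf : ∀ (g : G) (s : ↥S),
      (f (π * g))⁻¹ * f (π * g * ↑s) = (f g)⁻¹ * f (g * ↑s)) :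
    ∀ g : G, f (π * g) = f π * (f 1)⁻¹ * f g := by
  intro g
  have h := apply_eq_mul_of_inv_mul_apply_mul_eq hSgen (u := fun x => f (π * x)) (v := f)
    (fun x s hs => by simpa only [mul_assoc] using hdf x ⟨s, hs⟩) g
  rwa [mul_one] at h

/-- if `(f,F)` is an `n`-QI pair and `(df, ℓ_{Ff})` is `π`-periodic for the
shift action — i.e. `df(πg) = df(g)` and `ℓ_{Ff}(πg) = ℓ_{Ff}(g)` for all `g` — then
`f(πg) = f(π)·f(1)⁻¹·f(g)` for all `g ∈ G`. -/
theorem stmt18 {G H : Type*} [Group G] [Group H] (S : Finset G) (T : Finset H)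
    (hSsym : ∀ s ∈ S, s⁻¹ ∈ S) (hSgen : Subgroup.closure (S : Set G) = ⊤)
    (hTsym : ∀ t ∈ T, t⁻¹ ∈ T) (hTgen : Subgroup.closure (T : Set H) = ⊤)
    (n : ℕ) (f : G → H) (F : H → G)
    (hqip : IsQIPair (S : Set G) (T : Set H) n f F) (π : G)
    (hdf : ∀ (g : G) (s : ↥S),
      (f (π * g))⁻¹ * f (π * g * ↑s) = (f g)⁻¹ * f (g * ↑s))
    (hl : ∀ g : G, ∀ k ∈ ball (T : Set H) n 1,
      (π * g)⁻¹ * F (f (π * g) * k) = g⁻¹ * F (f g * k)) :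
    ∀ g : G, f (π * g) = f π * (f 1)⁻¹ * f g :=
  stmt18_general S hSgen f π hdf
end
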